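/- Polyconvex hull via probability measures: For every nonempty compact set 𝔠 ⊆ M^{2×2}, the polyconvex hull 𝔠^pc equals the set of barycenters ∫_{M^{2×2}} Λ dν(Λ) over all Borel probability measures ν on M^{2×2} with supp ν ⊆ 𝔠 and ∫_{M^{2×2}} det(Λ) dν(Λ) = det(∫_{M^{2×2}} Λ dν(Λ)). -/

import Mathlib

open MeasureTheory Matrix

noncomputable section

-- `M^{2×2}` is endowed with the Frobenius norm and the Borel σ-algebra.
attribute [local instance] Matrix.frobeniusNormedAddCommGroup Matrix.frobeniusNormedSpace

instance : MeasurableSpace (Matrix (Fin 2) (Fin 2) ℝ) := borel _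
instance : BorelSpace (Matrix (Fin 2) (Fin 2) ℝ) := ⟨rfl⟩

/-- A set `𝔄 ⊆ M^{2×2}` is polyconvex if there is a convex set `𝔠 ⊆ M^{2×2} × ℝ` such that
`𝔄 = {Λ : (Λ, det Λ) ∈ 𝔠}`. -/
def IsPolyconvexSet (A : Set (Matrix (Fin 2) (Fin 2) ℝ)) : Prop :=
  ∃ C : Set (Matrix (Fin 2) (Fin 2) ℝ × ℝ), Convex ℝ C ∧
    A = {Λ : Matrix (Fin 2) (Fin 2) ℝ | (Λ, Λ.det) ∈ C}

/-- The polyconvex hull of `𝔄 ⊆ M^{2×2}`: the intersection of all polyconvex sets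
containing `𝔄`. -/
def polyconvexHull (A : Set (Matrix (Fin 2) (Fin 2) ℝ)) : Set (Matrix (Fin 2) (Fin 2) ℝ) :=
  ⋂₀ {B : Set (Matrix (Fin 2) (Fin 2) ℝ) | IsPolyconvexSet B ∧ A ⊆ B}

/-! ### Auxiliary lemmas -/

/-- Padding a sum over `Fin m` to a sum over `Fin n` with zeros. -/
lemma aux_sum_dite_pad {α : Type*} [AddCommMonoid α] {m n : ℕ} (h : m ≤ n) (f : Fin m → α) :
    (∑ i : Fin n, if h' : (i : ℕ) < m then f ⟨i, h'⟩ else 0) = ∑ j : Fin m, f j := by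
  rw [Fin.sum_univ_eq_sum_range (fun k => if h' : k < m then f ⟨k, h'⟩ else 0) n,
    ← Finset.sum_subset (Finset.range_subset_range.mpr h)
      (fun x _ hx => dif_neg (by simpa using hx)),
    ← Fin.sum_univ_eq_sum_range (fun k => if h' : k < m then f ⟨k, h'⟩ else 0) m]
  exact Finset.sum_congr rfl fun j _ => by rw [dif_pos j.2]

/-- In a finite-dimensional real normed space, the convex hull of a compact set is compact. -/
lemma aux_isCompact_convexHull {E : Type*} [NormedAddCommGroup E] [NormedSpace ℝ E]
    [FiniteDimensional ℝ E] {K : Set E} (hK : IsCompact K) :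
    IsCompact (convexHull ℝ K) := by
  rcases K.eq_empty_or_nonempty with rfl | ⟨x₀, hx₀⟩
  · simp only [convexHull_empty]
    exact isCompact_empty
  set n := Module.finrank ℝ E + 1 with hn
  have hS : IsCompact ((stdSimplex ℝ (Fin n)) ×ˢ Set.univ.pi (fun _ : Fin n => K)) :=
    (isCompact_stdSimplex (𝕜 := ℝ) (ι := Fin n)).prod (isCompact_univ_pi fun _ => hK)
  have hf : Continuous (fun p : (Fin n → ℝ) × (Fin n → E) => ∑ i : Fin n, p.1 i • p.2 i) := by
    refine continuous_finset_sum _ fun i _ => ?_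
    exact ((continuous_apply i).comp continuous_fst).smul
      ((continuous_apply i).comp continuous_snd)
  have key : convexHull ℝ K =
      (fun p : (Fin n → ℝ) × (Fin n → E) => ∑ i : Fin n, p.1 i • p.2 i) ''
        ((stdSimplex ℝ (Fin n)) ×ˢ Set.univ.pi (fun _ : Fin n => K)) := by
    apply Set.Subset.antisymm
    · intro x hx
      obtain ⟨ι, hfin, z, w, hz, hai, hw0, hw1, hwz⟩ :=
        eq_pos_convex_span_of_mem_convexHull hx
      have hcard : Fintype.card ι ≤ n :=
        le_trans hai.card_le_finrank_succ
          (Nat.add_le_add_right (Submodule.finrank_le _) 1)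
      set m := Fintype.card ι with hm
      let e := Fintype.equivFin ι
      refine ⟨(fun i => if h : (i : ℕ) < m then w (e.symm ⟨i, h⟩) else 0,
               fun i => if h : (i : ℕ) < m then z (e.symm ⟨i, h⟩) else x₀), ⟨⟨?_, ?_⟩, ?_⟩, ?_⟩
      · intro i
        dsimp only
        split_ifs
        · exact (hw0 _).le
        · exact le_rfl
      · rw [aux_sum_dite_pad hcard (fun j => w (e.symm j)), Equiv.sum_comp e.symm w, hw1]
      · intro i _
        dsimp only
        split_ifs
        · exact hz ⟨_, rfl⟩
        · exact hx₀
      · dsimp only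
        have hpt : ∀ i : Fin n,
            ((if h : (i : ℕ) < m then w (e.symm ⟨i, h⟩) else 0) •
              (if h : (i : ℕ) < m then z (e.symm ⟨i, h⟩) else x₀)) =
            (if h : (i : ℕ) < m then w (e.symm ⟨i, h⟩) • z (e.symm ⟨i, h⟩) else 0) := by
          intro i
          by_cases h : (i : ℕ) < m
          · rw [dif_pos h, dif_pos h, dif_pos h]
          · rw [dif_neg h, dif_neg h, dif_neg h, zero_smul]
        rw [Finset.sum_congr rfl fun i _ => hpt i,
          aux_sum_dite_pad hcard (fun j => w (e.symm j) • z (e.symm j)),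
          Equiv.sum_comp e.symm (fun i => w i • z i), hwz]
    · rintro _ ⟨⟨w, z⟩, ⟨⟨hw0, hw1⟩, hzK⟩, rfl⟩
      exact (convex_convexHull ℝ K).sum_mem (fun i _ => hw0 i) hw1
        (fun i _ => subset_convexHull ℝ K (hzK i (Set.mem_univ i)))
  rw [key]
  exact hS.image hf

/-- The polyconvex hull is controlled by the convex hull of the graph of the determinant. -/
lemma aux_polyconvexHull_eq (𝔠 : Set (Matrix (Fin 2) (Fin 2) ℝ)) :
    polyconvexHull 𝔠 = {Λ : Matrix (Fin 2) (Fin 2) ℝ |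
      (Λ, Λ.det) ∈ convexHull ℝ ((fun A : Matrix (Fin 2) (Fin 2) ℝ => (A, A.det)) '' 𝔠)} := by
  apply Set.Subset.antisymm
  · exact Set.sInter_subset_of_mem
      ⟨⟨convexHull ℝ ((fun A : Matrix (Fin 2) (Fin 2) ℝ => (A, A.det)) '' 𝔠),
        convex_convexHull ℝ _, rfl⟩,
        fun Λ hΛ => subset_convexHull ℝ _ ⟨Λ, hΛ, rfl⟩⟩
  · intro Λ hΛ
    rintro B ⟨⟨C, hC, rfl⟩, hB⟩
    exact convexHull_min (Set.image_subset_iff.mpr hB) hC hΛ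

lemma aux_integrable_dirac {E : Type*} [NormedAddCommGroup E]
    {α : Type*} [MeasurableSpace α] {f : α → E} (hf : StronglyMeasurable f) (a : α) :
    Integrable f (Measure.dirac a) := by
  refine ⟨hf.aestronglyMeasurable, ?_⟩
  rw [HasFiniteIntegral, lintegral_dirac' a hf.enorm]
  exact enorm_lt_top

/-- Integral against a finite convex combination of Dirac measures. -/
lemma aux_integral_comb {E : Type*} [NormedAddCommGroup E] [NormedSpace ℝ E] [CompleteSpace E]
    {ι : Type} (t : Finset ι) (w : ι → ℝ) (hw : ∀ i ∈ t, 0 ≤ w i)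
    (a : ι → Matrix (Fin 2) (Fin 2) ℝ) {f : Matrix (Fin 2) (Fin 2) ℝ → E}
    (hf : StronglyMeasurable f) :
    ∫ x, f x ∂(∑ i ∈ t, ENNReal.ofReal (w i) • Measure.dirac (a i)) =
      ∑ i ∈ t, w i • f (a i) := by
  rw [integral_finset_sum_measure
    (fun i _ => (aux_integrable_dirac hf (a i)).smul_measure ENNReal.ofReal_ne_top)]
  refine Finset.sum_congr rfl fun i hi => ?_
  rw [integral_smul_measure, integral_dirac' f (a i) hf, ENNReal.toReal_ofReal (hw i hi)]

/-- **Polyconvex hull via probability measures.**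
For every nonempty compact set `𝔠 ⊆ M^{2×2}`, the polyconvex hull `𝔠^pc` is the set of
barycenters `∫ Λ dν(Λ)` over Borel probability measures `ν` supported in `𝔠` (for the
compact set `𝔠`, encoded as `ν 𝔠ᶜ = 0`) such that `∫ det Λ dν(Λ) = det (∫ Λ dν(Λ))`. -/
theorem polyconvexHull_eq_barycenters (𝔠 : Set (Matrix (Fin 2) (Fin 2) ℝ))
    (h_ne : 𝔠.Nonempty) (h_cpt : IsCompact 𝔠) :
    polyconvexHull 𝔠 =
      {M : Matrix (Fin 2) (Fin 2) ℝ | ∃ ν : Measure (Matrix (Fin 2) (Fin 2) ℝ),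
        IsProbabilityMeasure ν ∧ ν 𝔠ᶜ = 0 ∧
        (∫ Λ, Λ.det ∂ν) = (∫ Λ, Λ ∂ν).det ∧ M = ∫ Λ, Λ ∂ν} := by
  set φ : Matrix (Fin 2) (Fin 2) ℝ → Matrix (Fin 2) (Fin 2) ℝ × ℝ :=
    fun A => (A, A.det) with hφ
  have hφc : Continuous φ := continuous_id.prodMk continuous_id.matrix_det
  haveI : TopologicalSpace.PseudoMetrizableSpace (Matrix (Fin 2) (Fin 2) ℝ) :=
    inferInstanceAs (TopologicalSpace.PseudoMetrizableSpace (Fin 2 → Fin 2 → ℝ))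
  haveI : SecondCountableTopology (Matrix (Fin 2) (Fin 2) ℝ) :=
    inferInstanceAs (SecondCountableTopology (Fin 2 → Fin 2 → ℝ))
  letI : ContinuousENorm (Matrix (Fin 2) (Fin 2) ℝ × ℝ) := SeminormedAddGroup.toContinuousENorm
  have hdetm : StronglyMeasurable fun A : Matrix (Fin 2) (Fin 2) ℝ => A.det :=
    (continuous_id.matrix_det (X := Matrix (Fin 2) (Fin 2) ℝ)).stronglyMeasurable
  have hidm : StronglyMeasurable fun A : Matrix (Fin 2) (Fin 2) ℝ => A :=
    stronglyMeasurable_id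
  rw [aux_polyconvexHull_eq]
  ext M
  constructor
  · -- from the convex hull to a representing measure
    intro hM
    rw [convexHull_eq] at hM
    obtain ⟨ι, t, w, z, hw0, hw1, hz, hcm⟩ := hM
    have hz' : ∀ i ∈ t, (z i).1 ∈ 𝔠 ∧ (z i).2 = ((z i).1).det := by
      intro i hi
      obtain ⟨Λ, hΛ, hΛ'⟩ := hz i hi
      rw [← hΛ']
      exact ⟨hΛ, rfl⟩
    rw [Finset.centerMass_eq_of_sum_1 _ _ hw1] at hcm
    refine ⟨∑ i ∈ t, ENNReal.ofReal (w i) • Measure.dirac ((z i).1), ?_, ?_, ?_, ?_⟩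
    · constructor
      rw [Measure.coe_finset_sum, Finset.sum_apply]
      simp only [Measure.smul_apply, measure_univ, smul_eq_mul, mul_one]
      rw [← ENNReal.ofReal_sum_of_nonneg hw0, hw1, ENNReal.ofReal_one]
    · rw [Measure.coe_finset_sum, Finset.sum_apply]
      refine Finset.sum_eq_zero fun i hi => ?_
      rw [Measure.smul_apply,
        Measure.dirac_apply' _ h_cpt.isClosed.measurableSet.compl,
        Set.indicator_of_notMem (by simpa using (hz' i hi).1), smul_zero]
    · rw [aux_integral_comb t w hw0 _ hdetm, aux_integral_comb t w hw0 _ hidm]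
      have h1 : ∑ i ∈ t, w i • ((z i).1) = M := by
        have := congrArg Prod.fst hcm
        rw [Prod.fst_sum] at this
        simpa only [Prod.smul_fst] using this
      have h2 : ∑ i ∈ t, w i • ((z i).1).det = M.det := by
        have := congrArg Prod.snd hcm
        rw [Prod.snd_sum] at this
        simp only [Prod.smul_snd] at this
        rw [← this]
        exact Finset.sum_congr rfl fun i hi => by rw [(hz' i hi).2]
      rw [h1, h2]
    · rw [aux_integral_comb t w hw0 _ hidm]
      have := congrArg Prod.fst hcm
      rw [Prod.fst_sum] at this
      simp only [Prod.smul_fst] at this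
      exact this.symm
  · -- from a representing measure to the convex hull
    rintro ⟨ν, hνp, hνc, hνdet, rfl⟩
    have hae : ∀ᵐ Λ ∂ν, Λ ∈ 𝔠 := by
      rw [MeasureTheory.ae_iff]
      exact hνc
    obtain ⟨C, hC⟩ := h_cpt.exists_bound_of_continuousOn hφc.continuousOn
    have hφint : Integrable φ ν := by
      refine Integrable.mono' (integrable_const C) hφc.aestronglyMeasurable ?_
      filter_upwards [hae] with Λ hΛ using hC Λ hΛ
    have hmem : ∫ Λ, φ Λ ∂ν ∈ convexHull ℝ (φ '' 𝔠) := by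
      refine Convex.integral_mem (convex_convexHull ℝ _)
        (aux_isCompact_convexHull (h_cpt.image hφc)).isClosed ?_ hφint
      filter_upwards [hae] with Λ hΛ using subset_convexHull ℝ _ ⟨Λ, hΛ, rfl⟩
    have hpair : ∫ Λ, φ Λ ∂ν = (∫ Λ, Λ ∂ν, ∫ Λ, Λ.det ∂ν) :=
      integral_pair hφint.fst hφint.snd
    rw [hpair, hνdet] at hmem
    exact hmem
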